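/- Suppose P : [0,T] → ℝ^{n×n} is a symmetric C¹ solution of Ṗ + PA + AᵀP + Q - P B R^{-1} Bᵀ P = 0 with P(T) = H, Q ⪰ 0, H ⪰ 0, R ≻ 0. Then P(t) ⪰ 0 for all t ∈ [0,T]. -/

import Mathlib

/-!
Let `λ(t)` be the least value of `x ⬝ᵥ P t *ᵥ x` on the unit sphere and `v` a unit vector attaining
it. Then `P t *ᵥ v = λ(t) • v`, so the Riccati equation gives, with `S = B R⁻¹ Bᵀ`,
`v ⬝ᵥ P' t *ᵥ v = λ² (v ⬝ᵥ S *ᵥ v) - 2 λ (v ⬝ᵥ A *ᵥ v) - v ⬝ᵥ Q *ᵥ v`, which for `λ < 0` is at most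
`K |λ|` with `K` independent of `t`, because `Q ⪰ 0` and `λ` is bounded on `[0, T]`.
Since `s ↦ v ⬝ᵥ P s *ᵥ v` touches `λ` from above at `t`, the right Dini derivative of `λ` obeys the
same bound, so a negative value of `λ` persists up to `T`, contradicting `λ(T) ≥ 0` from `H ⪰ 0`.
-/

open Matrix Set Filter Topology

theorem frequently_slope_lt_of_le_of_hasDerivAt {g φ : ℝ → ℝ} {x φ' r : ℝ}
    (hle : ∀ z, g z ≤ φ z) (heq : g x = φ x) (hφ : HasDerivAt φ φ' x) (hr : φ' < r) :
    ∃ᶠ z in 𝓝[>] x, slope g x z < r := by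
  have hslope : Tendsto (slope φ x) (𝓝[>] x) (𝓝 φ') :=
    (hasDerivAt_iff_tendsto_slope.mp hφ).mono_left (nhdsWithin_mono x fun z hz => ne_of_gt hz)
  refine ((hslope.eventually_lt_const hr).and self_mem_nhdsWithin).mono ?_ |>.frequently
  rintro z ⟨hz, hxz : x < z⟩
  refine lt_of_le_of_lt ?_ hz
  rw [slope_def_field, slope_def_field, heq]
  exact div_le_div_of_nonneg_right (sub_le_sub_right (hle z) _) (sub_pos.mpr hxz).le

theorem image_neg_of_liminf_slope_right_le_neg_mul {g g' : ℝ → ℝ} {a b K : ℝ}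
    (hg : ContinuousOn g (Icc a b))
    (hg' : ∀ x ∈ Ico a b, ∀ r, g' x < r → ∃ᶠ z in 𝓝[>] x, slope g x z < r)
    (hbound : ∀ x ∈ Ico a b, g x < 0 → g' x ≤ -K * g x) (ha : g a < 0) :
    ∀ ⦃x⦄, x ∈ Icc a b → g x < 0 := by
  set B : ℝ → ℝ := fun x => g a * Real.exp (-(K + 1) * (x - a))
  have hB_neg : ∀ x, B x < 0 := fun x => mul_neg_of_neg_of_pos ha (Real.exp_pos _)
  have hB' : ∀ x, HasDerivAt B (-(K + 1) * B x) x := fun x => by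
    refine ((((hasDerivAt_id x).sub_const a).const_mul (-(K + 1))).exp.const_mul (g a)).congr_deriv
      ?_
    simp only [B, id]
    ring
  refine fun x hx => (image_le_of_liminf_slope_right_lt_deriv_boundary hg hg' (by simp [B]) hB'
    (fun y hy hgy => ?_) hx).trans_lt (hB_neg x)
  calc g' y ≤ -K * B y := hgy ▸ hbound y hy (hgy ▸ hB_neg y)
    _ < -(K + 1) * B y := by nlinarith [hB_neg y]

namespace Matrix

variable {ι : Type*} [Fintype ι]

def unitVectors (ι : Type*) [Fintype ι] : Set (ι → ℝ) := {x | x ⬝ᵥ x = 1}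

noncomputable def minRayleigh (M : Matrix ι ι ℝ) : ℝ :=
  sInf ((fun x => x ⬝ᵥ M *ᵥ x) '' unitVectors ι)

lemma isCompact_unitVectors : IsCompact (unitVectors ι) := by
  refine Metric.isCompact_of_isClosed_isBounded
    (isClosed_eq (continuous_id.dotProduct continuous_id) continuous_const) ?_
  refine (Metric.isBounded_closedBall (x := (0 : ι → ℝ)) (r := 1)).subset fun x hx => ?_
  rw [mem_closedBall_zero_iff, pi_norm_le_iff_of_nonneg zero_le_one]
  intro i
  rw [Real.norm_eq_abs, ← sq_le_one_iff_abs_le_one, ← show x ⬝ᵥ x = 1 from hx, sq]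
  exact Finset.single_le_sum (f := fun j => x j * x j) (fun j _ => mul_self_nonneg _)
    (Finset.mem_univ i)

lemma unitVectors_nonempty [Nonempty ι] : (unitVectors ι).Nonempty := by
  classical
  exact ⟨Pi.single (Classical.arbitrary ι) 1, by simp [unitVectors]⟩

lemma continuous_quadForm : Continuous fun p : Matrix ι ι ℝ × (ι → ℝ) => p.2 ⬝ᵥ p.1 *ᵥ p.2 :=
  continuous_snd.dotProduct (continuous_fst.matrix_mulVec continuous_snd)

lemma continuous_quadForm_right (M : Matrix ι ι ℝ) : Continuous fun x : ι → ℝ => x ⬝ᵥ M *ᵥ x :=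
  continuous_quadForm.comp (.prodMk_right M)

lemma bddBelow_quadForm_image (M : Matrix ι ι ℝ) :
    BddBelow ((fun x => x ⬝ᵥ M *ᵥ x) '' unitVectors ι) :=
  isCompact_unitVectors.bddBelow_image (continuous_quadForm_right M).continuousOn

lemma minRayleigh_le (M : Matrix ι ι ℝ) {x : ι → ℝ} (hx : x ∈ unitVectors ι) :
    minRayleigh M ≤ x ⬝ᵥ M *ᵥ x :=
  csInf_le (bddBelow_quadForm_image M) (mem_image_of_mem _ hx)

lemma exists_mem_unitVectors_minRayleigh_eq [Nonempty ι] (M : Matrix ι ι ℝ) :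
    ∃ v ∈ unitVectors ι, v ⬝ᵥ M *ᵥ v = minRayleigh M := by
  obtain ⟨v, hv, h⟩ := isCompact_unitVectors.exists_sInf_image_eq unitVectors_nonempty
    (continuous_quadForm_right M).continuousOn
  exact ⟨v, hv, h.symm⟩

lemma minRayleigh_mul_dotProduct_self_le (M : Matrix ι ι ℝ) (x : ι → ℝ) :
    minRayleigh M * (x ⬝ᵥ x) ≤ x ⬝ᵥ M *ᵥ x := by
  rcases eq_or_ne x 0 with rfl | hx
  · simp
  have hpos : 0 < x ⬝ᵥ x := by simpa using dotProduct_star_self_pos_iff.mpr hx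
  set c := √(x ⬝ᵥ x)
  have hc : 0 < c := Real.sqrt_pos.mpr hpos
  have hunit : c⁻¹ • x ∈ unitVectors ι := by
    simp only [unitVectors, mem_ofPred_eq, smul_dotProduct, dotProduct_smul, smul_eq_mul]
    rw [← mul_assoc, ← mul_inv, Real.mul_self_sqrt hpos.le, inv_mul_cancel₀ hpos.ne']
  have h := minRayleigh_le M hunit
  rw [mulVec_smul, smul_dotProduct, dotProduct_smul, smul_eq_mul, smul_eq_mul, ← mul_assoc,
    ← mul_inv, Real.mul_self_sqrt hpos.le, le_inv_mul_iff₀ hpos] at h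
  linarith [mul_comm (minRayleigh M) (x ⬝ᵥ x)]

lemma posSemidef_sub_minRayleigh_smul_one [DecidableEq ι] {M : Matrix ι ι ℝ}
    (hM : M.IsHermitian) : (M - minRayleigh M • (1 : Matrix ι ι ℝ)).PosSemidef := by
  refine .of_dotProduct_mulVec_nonneg (hM.sub (isHermitian_one.smul (.all _))) fun x => ?_
  rw [star_trivial, sub_mulVec, dotProduct_sub, smul_mulVec, one_mulVec, dotProduct_smul,
    smul_eq_mul, sub_nonneg]
  exact minRayleigh_mul_dotProduct_self_le M x

lemma PosSemidef.of_minRayleigh_nonneg {M : Matrix ι ι ℝ} (hM : M.IsHermitian)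
    (h : 0 ≤ minRayleigh M) : M.PosSemidef := by
  refine PosSemidef.of_dotProduct_mulVec_nonneg hM fun x => ?_
  rw [star_trivial]
  exact (mul_nonneg h (dotProduct_self_star_nonneg x)).trans
    (minRayleigh_mul_dotProduct_self_le M x)

lemma PosSemidef.minRayleigh_nonneg {M : Matrix ι ι ℝ} (hM : M.PosSemidef) : 0 ≤ minRayleigh M :=
  Real.sInf_nonneg <| forall_mem_image.2 fun x _ => by simpa using hM.dotProduct_mulVec_nonneg x

lemma mulVec_eq_minRayleigh_smul {M : Matrix ι ι ℝ} (hM : M.IsHermitian) {v : ι → ℝ}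
    (hv : v ∈ unitVectors ι) (hmin : v ⬝ᵥ M *ᵥ v = minRayleigh M) :
    M *ᵥ v = minRayleigh M • v := by
  classical
  have h := (posSemidef_sub_minRayleigh_smul_one hM).dotProduct_mulVec_zero_iff v
  rw [star_trivial, sub_mulVec, smul_mulVec, one_mulVec, dotProduct_sub, dotProduct_smul,
    show v ⬝ᵥ v = 1 from hv, hmin, smul_eq_mul, mul_one, sub_self, sub_eq_zero] at h
  exact h.mp rfl

lemma _root_.ContinuousOn.matrix_minRayleigh {P : ℝ → Matrix ι ι ℝ} {s : Set ℝ}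
    (hP : ContinuousOn P s) : ContinuousOn (fun t => minRayleigh (P t)) s := by
  rw [continuousOn_iff_continuous_domRestrict]
  exact isCompact_unitVectors.continuous_sInf
    (continuous_quadForm.comp (hP.domRestrict.prodMap continuous_id))

lemma hasDerivAt_dotProduct_mulVec {P P' : ℝ → Matrix ι ι ℝ} {t : ℝ}
    (h : ∀ i j, HasDerivAt (fun s => P s i j) (P' t i j) t) (v : ι → ℝ) :
    HasDerivAt (fun s => v ⬝ᵥ P s *ᵥ v) (v ⬝ᵥ P' t *ᵥ v) t := by
  simp only [dotProduct, mulVec, Finset.mul_sum]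
  exact HasDerivAt.fun_sum fun i _ => HasDerivAt.fun_sum fun j _ =>
    ((h i j).mul_const (v j)).const_mul (v i)

lemma dotProduct_riccati_mulVec {P : Matrix ι ι ℝ} (hP : P.IsHermitian) {v : ι → ℝ} {μ : ℝ}
    (hv : P *ᵥ v = μ • v) (A S : Matrix ι ι ℝ) :
    v ⬝ᵥ (P * S * P - P * A - Aᵀ * P) *ᵥ v =
      μ ^ 2 * (v ⬝ᵥ S *ᵥ v) - 2 * μ * (v ⬝ᵥ A *ᵥ v) := by
  have hv' : v ᵥ* P = μ • v := by
    rw [← mulVec_transpose, ← conjTranspose_eq_transpose_of_trivial, hP.eq, hv]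
  simp only [sub_mulVec, dotProduct_sub, ← mulVec_mulVec, hv, mulVec_smul, dotProduct_smul,
    dotProduct_mulVec v P, hv', smul_dotProduct, smul_eq_mul]
  rw [dotProduct_mulVec v Aᵀ, vecMul_transpose, dotProduct_comm (A *ᵥ v)]
  ring

theorem minRayleigh_nonneg_of_riccati [Nonempty ι] {a b : ℝ} {A S Q H : Matrix ι ι ℝ}
    (hQ : Q.PosSemidef) (hH : H.PosSemidef) {P P' : ℝ → Matrix ι ι ℝ}
    (hsymm : ∀ t ∈ Icc a b, (P t).IsHermitian)
    (hderiv : ∀ t ∈ Icc a b, ∀ i j, HasDerivAt (fun s => P s i j) (P' t i j) t)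
    (hric : ∀ t ∈ Icc a b, P' t + P t * A + Aᵀ * P t + Q - P t * S * P t = 0)
    (hfin : P b = H) : ∀ t ∈ Icc a b, 0 ≤ minRayleigh (P t) := by
  intro t₀ ht₀
  by_contra! hneg
  have hsub : Icc t₀ b ⊆ Icc a b := Icc_subset_Icc_left ht₀.1
  have hPc : ContinuousOn P (Icc a b) := continuousOn_pi.2 fun i => continuousOn_pi.2 fun j =>
    fun t ht => (hderiv t ht i j).continuousAt.continuousWithinAt
  have hcont := hPc.matrix_minRayleigh
  choose V hV hVmin using fun t => exists_mem_unitVectors_minRayleigh_eq (P t)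
  obtain ⟨M, hM⟩ := isCompact_Icc.exists_bound_of_continuousOn hcont
  obtain ⟨CA, hCA⟩ := isCompact_unitVectors.exists_bound_of_continuousOn
    (continuous_quadForm_right A).continuousOn
  obtain ⟨CS, hCS⟩ := isCompact_unitVectors.exists_bound_of_continuousOn
    (continuous_quadForm_right S).continuousOn
  refine (image_neg_of_liminf_slope_right_le_neg_mul (g' := fun x => V x ⬝ᵥ P' x *ᵥ V x)
    (K := M * CS + 2 * CA) (hcont.mono hsub) (fun x hx r hr => ?_) (fun x hx hgx => ?_) hneg
    (right_mem_Icc.2 ht₀.2)).not_ge (hfin ▸ hH.minRayleigh_nonneg)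
  · exact frequently_slope_lt_of_le_of_hasDerivAt (fun z => minRayleigh_le (P z) (hV x))
      (hVmin x).symm (hasDerivAt_dotProduct_mulVec (hderiv x (hsub (Ico_subset_Icc_self hx))) _) hr
  have hx' := hsub (Ico_subset_Icc_self hx)
  have hP' : P' x = P x * S * P x - P x * A - Aᵀ * P x - Q := by
    rw [← sub_eq_zero, ← hric x hx']
    abel
  have hμ : |minRayleigh (P x)| ≤ M := by simpa using hM x hx'
  have ha : |V x ⬝ᵥ A *ᵥ V x| ≤ CA := by simpa using hCA _ (hV x)
  have hs : |V x ⬝ᵥ S *ᵥ V x| ≤ CS := by simpa using hCS _ (hV x)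
  have hq : 0 ≤ V x ⬝ᵥ Q *ᵥ V x := by simpa using hQ.dotProduct_mulVec_nonneg (V x)
  rw [hP', sub_mulVec, dotProduct_sub, dotProduct_riccati_mulVec (hsymm x hx')
    (mulVec_eq_minRayleigh_smul (hsymm x hx') (hV x) (hVmin x))]
  set μ := minRayleigh (P x)
  -- `μ² (v ⬝ᵥ S *ᵥ v) ≤ |μ| M CS`, `-2μ (v ⬝ᵥ A *ᵥ v) ≤ 2 |μ| CA` and `-(v ⬝ᵥ Q *ᵥ v) ≤ 0`
  have hμ' : μ ^ 2 ≤ -μ * M := by nlinarith [abs_of_neg hgx]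
  nlinarith [abs_le.1 ha, abs_le.1 hs, abs_nonneg (V x ⬝ᵥ S *ᵥ V x)]

theorem posSemidef_of_riccati {a b : ℝ} {A S Q H : Matrix ι ι ℝ}
    (hQ : Q.PosSemidef) (hH : H.PosSemidef) {P P' : ℝ → Matrix ι ι ℝ}
    (hsymm : ∀ t ∈ Icc a b, (P t).IsSymm)
    (hderiv : ∀ t ∈ Icc a b, ∀ i j, HasDerivAt (fun s => P s i j) (P' t i j) t)
    (hric : ∀ t ∈ Icc a b, P' t + P t * A + Aᵀ * P t + Q - P t * S * P t = 0)
    (hfin : P b = H) : ∀ t ∈ Icc a b, (P t).PosSemidef := by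
  intro t ht
  rcases isEmpty_or_nonempty ι with hι | hι
  · exact Subsingleton.elim (P t) 0 ▸ PosSemidef.zero
  have hherm t ht : (P t).IsHermitian := isHermitian_iff_isSymm.2 (hsymm t ht)
  exact .of_minRayleigh_nonneg (hherm t ht)
    (minRayleigh_nonneg_of_riccati hQ hH hherm hderiv hric hfin t ht)

end Matrix

theorem riccati_solution_is_posSemidef_general
    (n m : ℕ) (T : ℝ)
    (A : Matrix (Fin n) (Fin n) ℝ) (B : Matrix (Fin n) (Fin m) ℝ)
    (Q H : Matrix (Fin n) (Fin n) ℝ) (R : Matrix (Fin m) (Fin m) ℝ)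
    (hQ : Q.PosSemidef) (hH : H.PosSemidef)
    (P P' : ℝ → Matrix (Fin n) (Fin n) ℝ)
    (hsymm : ∀ t ∈ Icc (0 : ℝ) T, (P t).IsSymm)
    (hderiv : ∀ t ∈ Icc (0 : ℝ) T, ∀ i j, HasDerivAt (fun s => P s i j) (P' t i j) t)
    (hric : ∀ t ∈ Icc (0 : ℝ) T,
      P' t + P t * A + Aᵀ * P t + Q - P t * B * R⁻¹ * Bᵀ * P t = 0)
    (hfin : P T = H) :
    ∀ t ∈ Icc (0 : ℝ) T, (P t).PosSemidef :=
  posSemidef_of_riccati (S := B * R⁻¹ * Bᵀ) hQ hH hsymm hderiv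
    (fun t ht => by simpa only [Matrix.mul_assoc] using hric t ht) hfin

/-- a symmetric C¹ solution of the Riccati equation with
`Q ⪰ 0`, `H ⪰ 0`, `R ≻ 0` is positive semidefinite on `[0,T]`. -/
theorem riccati_solution_is_posSemidef
    (n m : ℕ) (T : ℝ) (hT : 0 ≤ T)
    (A : Matrix (Fin n) (Fin n) ℝ) (B : Matrix (Fin n) (Fin m) ℝ)
    (Q H : Matrix (Fin n) (Fin n) ℝ) (R : Matrix (Fin m) (Fin m) ℝ)
    (hQ : Q.PosSemidef) (hH : H.PosSemidef) (hR : R.PosDef)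
    (P P' : ℝ → Matrix (Fin n) (Fin n) ℝ)
    (hsymm : ∀ t ∈ Icc (0 : ℝ) T, (P t).IsSymm)
    (hderiv : ∀ t ∈ Icc (0 : ℝ) T, ∀ i j, HasDerivAt (fun s => P s i j) (P' t i j) t)
    (hcont : ∀ i j, ContinuousOn (fun t => P' t i j) (Icc (0 : ℝ) T))
    (hric : ∀ t ∈ Icc (0 : ℝ) T,
      P' t + P t * A + Aᵀ * P t + Q - P t * B * R⁻¹ * Bᵀ * P t = 0)
    (hfin : P T = H) :
    ∀ t ∈ Icc (0 : ℝ) T, (P t).PosSemidef :=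
  riccati_solution_is_posSemidef_general n m T A B Q H R hQ hH P P' hsymm hderiv hric hfin
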